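/- arXiv:1304.8102 — 3 statements merged into one kernel-verified Lean document; each statement's English description precedes it below -/
import Mathlib

section
/- Let n ≥ 1 and let P_e be the symbol error rate of a decoder with center-convex decision regions in the AWGN channel, i.e. P_e(γ) = 1 − Σ_{i=1}^{M} q_i ∫_{Ω_i} (γ/(2π))^{n/2} exp(−γ‖x‖²/2) dx for SNR γ > 0. If Metric.closedBall 0 d_min ⊆ Ω_i for every i with d_min > 0, then P_e is convex on the set {γ : γ > 0 and γ ≥ (n−2)/d_min²}; in particular, for n ≤ 2, P_e is convex on all of (0,∞). -/
/-!
In polar coordinates `x = r • θ`, the integral of the Gaussian density over `Ω` becomes an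
integral over the unit sphere of radial integrals over the sections `{r > 0 | r • θ ∈ Ω}`.
Star-shapedness makes every section an initial interval of `(0, ∞)` of length `R θ ≥ d_min`
(possibly infinite). Substituting `u = √γ r`, the radial integral is `F (√γ R)` with
`F t = ∫₀ᵗ uⁿ⁻¹ e^{-u²/2} du`; its derivative in `γ` is a multiple of
`(√γ R)ⁿ⁻² e^{-γR²/2}`, which decreases as soon as `γ R² ≥ n - 2`. So each radial integral,
hence the probability of correct decision, is concave in `γ` there, and `P_e` is convex.
-/

open MeasureTheory Metric Real Set

local notation "dim" => Module.finrank ℝ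

theorem concaveOn_integral {α E : Type*} [MeasurableSpace α] {μ : Measure α} [AddCommGroup E]
    [Module ℝ E] {s : Set E} {g : α → E → ℝ} (hs : Convex ℝ s) (hg : ∀ a, ConcaveOn ℝ s (g a))
    (hint : ∀ x ∈ s, Integrable (fun a ↦ g a x) μ) :
    ConcaveOn ℝ s (fun x ↦ ∫ a, g a x ∂μ) := by
  refine ⟨hs, fun x hx y hy a b ha hb hab ↦ ?_⟩
  have hax := (hint x hx).const_mul a
  have hby := (hint y hy).const_mul b
  simp only [smul_eq_mul]
  rw [← integral_const_mul, ← integral_const_mul, ← integral_add hax hby]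
  exact integral_mono (hax.add hby) (hint _ (hs hx hy ha hb hab)) fun θ ↦
    (hg θ).2 hx hy ha hb hab

theorem concaveOn_sum {ι E : Type*} [AddCommGroup E] [Module ℝ E] {s : Set E} {t : Finset ι}
    {f : ι → E → ℝ} (hs : Convex ℝ s) (hf : ∀ i ∈ t, ConcaveOn ℝ s (f i)) :
    ConcaveOn ℝ s (fun x ↦ ∑ i ∈ t, f i x) := by
  classical
  induction t using Finset.induction_on with
  | empty => simpa using concaveOn_const 0 hs
  | insert i t hi ih =>
    simp_rw [Finset.sum_insert hi]
    exact (hf i (Finset.mem_insert_self i t)).add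
      (ih fun j hj ↦ hf j (Finset.mem_insert_of_mem hj))

theorem convex_setOf_pos_and_le_mul {a c : ℝ} (hc : 0 ≤ c) :
    Convex ℝ {γ : ℝ | 0 < γ ∧ a ≤ γ * c} :=
  Set.OrdConnected.convex ⟨fun _ hx _ _ _ hy ↦
    ⟨hx.1.trans_le hy.1, hx.2.trans (mul_le_mul_of_nonneg_right hy.1 hc)⟩⟩

namespace MeasureTheory

variable {E F : Type*} [NormedAddCommGroup E] [NormedSpace ℝ E] [FiniteDimensional ℝ E]
  [MeasurableSpace E] [BorelSpace E] (μ : Measure E) [μ.IsAddHaarMeasure]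
  [NormedAddCommGroup F]

theorem measurePreserving_homeomorphUnitSphereProd_symm :
    MeasurePreserving (homeomorphUnitSphereProd E).toMeasurableEquiv.symm
      (μ.toSphere.prod (Measure.volumeIoiPow (dim E - 1))) (μ.comap (↑)) :=
  μ.measurePreserving_homeomorphUnitSphereProd.symm (homeomorphUnitSphereProd E).toMeasurableEquiv

variable [Nontrivial E]

theorem integrable_comp_smul_toSphere_prod_iff {f : E → F} :
    Integrable (fun p : sphere (0 : E) 1 × Ioi (0 : ℝ) ↦ f ((p.2 : ℝ) • (p.1 : E)))
      (μ.toSphere.prod (Measure.volumeIoiPow (dim E - 1))) ↔ Integrable f μ := by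
  have := (measurePreserving_homeomorphUnitSphereProd_symm μ).integrable_comp_emb
    (MeasurableEquiv.measurableEmbedding _) (g := f ∘ Subtype.val)
  refine this.trans ?_
  rw [← integrableOn_iff_comap_subtypeVal (measurableSet_singleton _).compl, IntegrableOn,
    restrict_compl_singleton]

variable [NormedSpace ℝ F]

theorem Measure.integral_volumeIoiPow (n : ℕ) (g : ℝ → F) :
    ∫ r : Ioi (0 : ℝ), g r ∂Measure.volumeIoiPow n = ∫ r in Ioi (0 : ℝ), r ^ n • g r := by
  simp only [Measure.volumeIoiPow, ENNReal.ofReal]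
  rw [integral_withDensity_eq_integral_smul (measurable_subtype_coe.pow_const _).real_toNNReal,
    integral_subtype_comap measurableSet_Ioi fun r ↦ Real.toNNReal (r ^ n) • g r]
  refine setIntegral_congr_fun measurableSet_Ioi fun r hr ↦ ?_
  rw [NNReal.smul_def, Real.coe_toNNReal _ (pow_nonneg (le_of_lt hr) _)]

theorem integral_eq_integral_toSphere_prod (f : E → F) :
    ∫ x, f x ∂μ = ∫ p : sphere (0 : E) 1 × Ioi (0 : ℝ), f ((p.2 : ℝ) • (p.1 : E))
      ∂(μ.toSphere.prod (Measure.volumeIoiPow (dim E - 1))) := by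
  refine Eq.trans ?_ ((measurePreserving_homeomorphUnitSphereProd_symm μ).integral_comp'
      (fun x : ({0}ᶜ : Set E) ↦ f x)).symm
  rw [integral_subtype_comap (measurableSet_singleton _).compl, restrict_compl_singleton]

theorem integral_eq_integral_toSphere_integral_Ioi {f : E → F} (hf : Integrable f μ) :
    ∫ x, f x ∂μ = ∫ θ : sphere (0 : E) 1,
      (∫ r in Ioi (0 : ℝ), r ^ (dim E - 1) • f (r • (θ : E))) ∂μ.toSphere := by
  rw [integral_eq_integral_toSphere_prod,
    integral_prod _ ((integrable_comp_smul_toSphere_prod_iff μ).2 hf)]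
  exact integral_congr_ae <| ae_of_all _ fun θ ↦
    Measure.integral_volumeIoiPow _ fun r ↦ f (r • (θ : E))

theorem Integrable.integrable_toSphere_integral_Ioi {f : E → F} (hf : Integrable f μ) :
    Integrable (fun θ : sphere (0 : E) 1 ↦
      ∫ r in Ioi (0 : ℝ), r ^ (dim E - 1) • f (r • (θ : E))) μ.toSphere := by
  refine ((integrable_comp_smul_toSphere_prod_iff μ).2 hf).integral_prod_left.congr <|
    ae_of_all _ fun θ ↦ ?_
  exact Measure.integral_volumeIoiPow _ fun r ↦ f (r • (θ : E))

end MeasureTheory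

/-- Up to normalisation, the distribution function of the χ distribution with `n` degrees of
freedom. -/
noncomputable def gaussianRadialMass (n : ℕ) (t : ℝ) : ℝ :=
  ∫ u in (0 : ℝ)..t, u ^ (n - 1) * exp (-u ^ 2 / 2)

theorem hasDerivAt_gaussianRadialMass (n : ℕ) (t : ℝ) :
    HasDerivAt (gaussianRadialMass n) (t ^ (n - 1) * exp (-t ^ 2 / 2)) t :=
  (Continuous.integral_hasStrictDerivAt (by fun_prop) 0 t).hasDerivAt

theorem pow_mul_rpow_mul_exp_eq_sqrt_mul {n : ℕ} (hn : 1 ≤ n) {γ : ℝ} (hγ : 0 < γ) (r : ℝ) :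
    r ^ (n - 1) * (γ ^ ((n : ℝ) / 2) * exp (-γ * r ^ 2 / 2)) =
      √γ * ((√γ * r) ^ (n - 1) * exp (-(√γ * r) ^ 2 / 2)) := by
  have hpow : γ ^ ((n : ℝ) / 2) = √γ ^ (n - 1) * √γ := by
    rw [← pow_succ, Nat.sub_add_cancel hn, sqrt_eq_rpow, ← rpow_natCast, ← rpow_mul hγ.le]
    ring_nf
  rw [hpow]
  simp only [mul_pow, sq_sqrt hγ.le]
  ring_nf

theorem setIntegral_Ioo_pow_mul_gaussian {n : ℕ} (hn : 1 ≤ n) {γ R : ℝ} (hγ : 0 < γ)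
    (hR : 0 ≤ R) :
    ∫ r in Ioo 0 R, r ^ (n - 1) * (γ ^ ((n : ℝ) / 2) * exp (-γ * r ^ 2 / 2)) =
      gaussianRadialMass n (√γ * R) := by
  simp_rw [pow_mul_rpow_mul_exp_eq_sqrt_mul hn hγ]
  rw [← integral_Ioc_eq_integral_Ioo, ← intervalIntegral.integral_of_le hR,
    intervalIntegral.integral_const_mul, ← smul_eq_mul,
    intervalIntegral.smul_integral_comp_mul_left (fun u ↦ u ^ (n - 1) * exp (-u ^ 2 / 2)),
    mul_zero, gaussianRadialMass]

theorem setIntegral_Ioi_pow_mul_gaussian {n : ℕ} (hn : 1 ≤ n) {γ : ℝ} (hγ : 0 < γ) :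
    ∫ r in Ioi 0, r ^ (n - 1) * (γ ^ ((n : ℝ) / 2) * exp (-γ * r ^ 2 / 2)) =
      ∫ u in Ioi 0, u ^ (n - 1) * exp (-u ^ 2 / 2) := by
  have hs : 0 < √γ := sqrt_pos.2 hγ
  simp_rw [pow_mul_rpow_mul_exp_eq_sqrt_mul hn hγ]
  rw [integral_const_mul, integral_comp_mul_left_Ioi (fun u ↦ u ^ (n - 1) * exp (-u ^ 2 / 2)) 0 hs,
    mul_zero, smul_eq_mul, ← mul_assoc, mul_inv_cancel₀ hs.ne', one_mul]

theorem antitoneOn_rpow_mul_exp_neg_sq (a : ℝ) :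
    AntitoneOn (fun x : ℝ ↦ x ^ a * exp (-x ^ 2 / 2)) {x | 0 < x ∧ a ≤ x ^ 2} := by
  have hconv : Convex ℝ {x : ℝ | 0 < x ∧ a ≤ x ^ 2} :=
    Set.OrdConnected.convex ⟨fun x hx _ _ y hy ↦
      ⟨hx.1.trans_le hy.1, hx.2.trans (pow_le_pow_left₀ hx.1.le hy.1 2)⟩⟩
  have hderiv : ∀ x : ℝ, 0 < x → HasDerivAt (fun x : ℝ ↦ x ^ a * exp (-x ^ 2 / 2))
      (x ^ (a - 1) * exp (-x ^ 2 / 2) * (a - x ^ 2)) x := by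
    intro x hx
    have hq : HasDerivAt (fun x : ℝ ↦ -x ^ 2 / 2) (-x) x :=
      ((hasDerivAt_pow 2 x).fun_neg.div_const 2).congr_deriv (by ring)
    refine ((hasDerivAt_rpow_const (Or.inl hx.ne')).mul hq.exp).congr_deriv ?_
    rw [show x ^ a = x ^ (a - 1) * x by rw [rpow_sub_one hx.ne']; field_simp]
    ring
  refine antitoneOn_of_deriv_nonpos hconv ?_ ?_ ?_
  · exact fun x hx ↦ (hderiv x hx.1).continuousAt.continuousWithinAt
  · exact fun x hx ↦ (hderiv x (interior_subset hx).1).differentiableAt.differentiableWithinAt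
  · intro x hx
    obtain ⟨hx0, hax⟩ := interior_subset hx
    rw [(hderiv x hx0).deriv]
    exact mul_nonpos_of_nonneg_of_nonpos (by positivity) (by linarith)

theorem hasDerivAt_gaussianRadialMass_sqrt_mul {n : ℕ} (hn : 1 ≤ n) {R γ : ℝ} (hR : 0 < R)
    (hγ : 0 < γ) :
    HasDerivAt (fun γ ↦ gaussianRadialMass n (√γ * R))
      (R ^ 2 / 2 * ((√γ * R) ^ ((n : ℝ) - 2) * exp (-(√γ * R) ^ 2 / 2))) γ := by
  refine ((hasDerivAt_gaussianRadialMass n _).comp γ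
    ((hasDerivAt_sqrt hγ.ne').mul_const R)).congr_deriv ?_
  have hpow : (√γ * R) ^ (n - 1) = (√γ * R) ^ ((n : ℝ) - 2) * (√γ * R) := by
    rw [← rpow_add_one (by positivity), ← rpow_natCast, Nat.cast_sub hn]
    ring_nf
  rw [hpow]
  field_simp

theorem concaveOn_gaussianRadialMass_sqrt_mul {n : ℕ} (hn : 1 ≤ n) {R : ℝ} (hR : 0 < R) :
    ConcaveOn ℝ {γ : ℝ | 0 < γ ∧ (n : ℝ) - 2 ≤ γ * R ^ 2}
      (fun γ ↦ gaussianRadialMass n (√γ * R)) := by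
  have hderiv := fun γ (hγ : 0 < γ) ↦ hasDerivAt_gaussianRadialMass_sqrt_mul hn hR hγ
  refine AntitoneOn.concaveOn_of_deriv (convex_setOf_pos_and_le_mul (sq_nonneg R))
    (fun γ hγ ↦ (hderiv γ hγ.1).continuousAt.continuousWithinAt)
    (fun γ hγ ↦ (hderiv γ (interior_subset hγ).1).differentiableAt.differentiableWithinAt) ?_
  refine AntitoneOn.mono ?_ interior_subset
  intro γ₁ hγ₁ γ₂ hγ₂ h₁₂
  rw [(hderiv γ₁ hγ₁.1).deriv, (hderiv γ₂ hγ₂.1).deriv]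
  have hsq : ∀ γ : ℝ, 0 < γ → (√γ * R) ^ 2 = γ * R ^ 2 := fun γ hγ ↦ by
    rw [mul_pow, sq_sqrt hγ.le]
  have hx₁ : 0 < √γ₁ * R := mul_pos (sqrt_pos.2 hγ₁.1) hR
  have hx₁₂ : √γ₁ * R ≤ √γ₂ * R := mul_le_mul_of_nonneg_right (sqrt_le_sqrt h₁₂) hR.le
  refine mul_le_mul_of_nonneg_left (antitoneOn_rpow_mul_exp_neg_sq _ ⟨hx₁, ?_⟩
    ⟨hx₁.trans_le hx₁₂, ?_⟩ hx₁₂) (by positivity)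
  · exact (hsq γ₁ hγ₁.1).symm ▸ hγ₁.2
  · exact (hsq γ₂ hγ₂.1).symm ▸ hγ₂.2

theorem ae_eq_Ioo_sSup_of_forall_Ioc_subset {T : Set ℝ} (hT : T ⊆ Ioi 0)
    (hdown : ∀ r ∈ T, Ioc 0 r ⊆ T) (hne : T.Nonempty) (hbdd : BddAbove T) :
    T =ᵐ[volume] Ioo 0 (sSup T) := by
  have hIoo : Ioo 0 (sSup T) ⊆ T := fun x hx ↦ by
    obtain ⟨r, hr, hxr⟩ := exists_lt_of_lt_csSup hne hx.2
    exact hdown r hr ⟨hx.1, hxr.le⟩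
  have hIoc : T ⊆ Ioc 0 (sSup T) := fun r hr ↦ ⟨hT hr, le_csSup hbdd hr⟩
  exact (hIoc.eventuallyLE.trans Ioo_ae_eq_Ioc.symm.le).antisymm hIoo.eventuallyLE

theorem eq_Ioi_of_forall_Ioc_subset {T : Set ℝ} (hT : T ⊆ Ioi 0)
    (hdown : ∀ r ∈ T, Ioc 0 r ⊆ T) (hbdd : ¬BddAbove T) : T = Ioi 0 := by
  refine hT.antisymm fun x hx ↦ ?_
  obtain ⟨r, hr, hxr⟩ := not_bddAbove_iff.1 hbdd x
  exact hdown r hr ⟨hx, hxr.le⟩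

theorem concaveOn_setIntegral_pow_mul_gaussian {n : ℕ} (hn : 1 ≤ n) {T : Set ℝ} {d : ℝ}
    (hd : 0 < d) (hT : T ⊆ Ioi 0) (hdown : ∀ r ∈ T, Ioc 0 r ⊆ T) (hdT : d ∈ T) :
    ConcaveOn ℝ {γ : ℝ | 0 < γ ∧ (n : ℝ) - 2 ≤ γ * d ^ 2}
      (fun γ ↦ ∫ r in T, r ^ (n - 1) * (γ ^ ((n : ℝ) / 2) * exp (-γ * r ^ 2 / 2))) := by
  have hconv := convex_setOf_pos_and_le_mul (a := (n : ℝ) - 2) (sq_nonneg d)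
  by_cases hbdd : BddAbove T
  · have hdR : d ≤ sSup T := le_csSup hbdd hdT
    refine ((concaveOn_gaussianRadialMass_sqrt_mul hn (hd.trans_le hdR)).subset
      (fun γ hγ ↦ ⟨hγ.1, hγ.2.trans (mul_le_mul_of_nonneg_left
        (pow_le_pow_left₀ hd.le hdR 2) hγ.1.le)⟩) hconv).congr fun γ hγ ↦ ?_
    rw [setIntegral_congr_set (ae_eq_Ioo_sSup_of_forall_Ioc_subset hT hdown ⟨d, hdT⟩ hbdd),
      setIntegral_Ioo_pow_mul_gaussian hn hγ.1 (hd.le.trans hdR)]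
  · rw [eq_Ioi_of_forall_Ioc_subset hT hdown hbdd]
    exact (concaveOn_const _ hconv).congr fun γ hγ ↦
      (setIntegral_Ioi_pow_mul_gaussian hn hγ.1).symm

section StarConvex

variable {E : Type*} [NormedAddCommGroup E] [NormedSpace ℝ E]

theorem StarConvex.Ioc_subset_Ioi_inter_preimage_smul {Ω : Set E} (hΩ : StarConvex ℝ 0 Ω)
    (θ : E) {r : ℝ} (hr : r ∈ Ioi 0 ∩ (· • θ) ⁻¹' Ω) : Ioc 0 r ⊆ Ioi 0 ∩ (· • θ) ⁻¹' Ω := by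
  obtain ⟨hr : 0 < r, hrθ⟩ := hr
  rintro u ⟨hu, hur⟩
  refine ⟨hu, ?_⟩
  have := hΩ.smul_mem hrθ (div_nonneg hu.le hr.le) (div_le_one_of_le₀ hur hr.le)
  rwa [smul_smul, div_mul_cancel₀ _ (ne_of_gt hr)] at this

variable [FiniteDimensional ℝ E] [MeasurableSpace E] [BorelSpace E] [Nontrivial E]
  (μ : Measure E) [μ.IsAddHaarMeasure]

theorem integrable_exp_neg_mul_sq_norm {b : ℝ} (hb : 0 < b) :
    Integrable (fun x : E ↦ exp (-b * ‖x‖ ^ 2)) μ := by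
  refine (integrable_fun_norm_addHaar μ (f := fun r ↦ exp (-b * r ^ 2))).2 ?_
  refine (integrableOn_rpow_mul_exp_neg_mul_sq hb (s := (dim E - 1 : ℕ))
    (neg_one_lt_zero.trans_le (Nat.cast_nonneg _))).congr_fun
    (fun r _ ↦ ?_) measurableSet_Ioi
  simp only [rpow_natCast, smul_eq_mul]

theorem concaveOn_setIntegral_gaussian_of_starConvex {Ω : Set E} (hΩ : MeasurableSet Ω)
    (hstar : StarConvex ℝ 0 Ω) {d : ℝ} (hd : 0 < d) (hball : closedBall (0 : E) d ⊆ Ω) :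
    ConcaveOn ℝ {γ : ℝ | 0 < γ ∧ (dim E : ℝ) - 2 ≤ γ * d ^ 2}
      (fun γ ↦ ∫ x in Ω, γ ^ ((dim E : ℝ) / 2) * exp (-γ * ‖x‖ ^ 2 / 2) ∂μ) := by
  set n := dim E
  set G : ℝ → E → ℝ := fun γ x ↦ γ ^ ((n : ℝ) / 2) * exp (-γ * ‖x‖ ^ 2 / 2)
  have hGint : ∀ γ : ℝ, 0 < γ → Integrable (Ω.indicator (G γ)) μ := fun γ hγ ↦
    (((integrable_exp_neg_mul_sq_norm μ (half_pos hγ)).const_mul (γ ^ ((n : ℝ) / 2))).congr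
      (ae_of_all _ fun x ↦ by simp only [G]; ring_nf)).indicator hΩ
  have hnorm : ∀ (θ : sphere (0 : E) 1) (r : ℝ), 0 < r → ‖r • (θ : E)‖ = r := fun θ r hr ↦ by
    rw [norm_smul, norm_eq_of_mem_sphere θ, mul_one, norm_of_nonneg hr.le]
  have hsection : ∀ (θ : sphere (0 : E) 1) (γ : ℝ),
      ∫ r in Ioi (0 : ℝ), r ^ (n - 1) • Ω.indicator (G γ) (r • (θ : E)) =
        ∫ r in Ioi 0 ∩ (· • (θ : E)) ⁻¹' Ω,
          r ^ (n - 1) * (γ ^ ((n : ℝ) / 2) * exp (-γ * r ^ 2 / 2)) := by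
    intro θ γ
    rw [← setIntegral_indicator (hΩ.preimage (by fun_prop : Measurable fun r : ℝ ↦ r • (θ : E)))]
    refine setIntegral_congr_fun measurableSet_Ioi fun r hr ↦ ?_
    by_cases hrΩ : r • (θ : E) ∈ Ω <;> simp [hrΩ, G, hnorm θ r hr]
  have hslice : ∀ θ : sphere (0 : E) 1, ConcaveOn ℝ {γ : ℝ | 0 < γ ∧ (n : ℝ) - 2 ≤ γ * d ^ 2}
      (fun γ ↦ ∫ r in Ioi (0 : ℝ), r ^ (n - 1) • Ω.indicator (G γ) (r • (θ : E))) := fun θ ↦ by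
    simp_rw [hsection θ]
    refine concaveOn_setIntegral_pow_mul_gaussian Module.finrank_pos hd inter_subset_left
      (fun r hr ↦ hstar.Ioc_subset_Ioi_inter_preimage_smul θ hr) ⟨hd, hball ?_⟩
    rw [mem_closedBall_zero_iff, hnorm θ d hd]
  refine (concaveOn_integral (convex_setOf_pos_and_le_mul (sq_nonneg d)) hslice
    fun γ hγ ↦ (hGint γ hγ.1).integrable_toSphere_integral_Ioi μ).congr fun γ hγ ↦ ?_
  rw [← integral_indicator hΩ]
  exact (integral_eq_integral_toSphere_integral_Ioi μ (hGint γ hγ.1)).symm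

end StarConvex

theorem concaveOn_setIntegral_gaussianDensity_of_starConvex {n : ℕ} (hn : 1 ≤ n)
    {Ω : Set (EuclideanSpace ℝ (Fin n))} (hΩ : MeasurableSet Ω) (hstar : StarConvex ℝ 0 Ω)
    {d : ℝ} (hd : 0 < d) (hball : closedBall 0 d ⊆ Ω) :
    ConcaveOn ℝ {γ : ℝ | 0 < γ ∧ ((n : ℝ) - 2) / d ^ 2 ≤ γ}
      (fun γ ↦ ∫ x in Ω, (γ / (2 * π)) ^ ((n : ℝ) / 2) * exp (-γ * ‖x‖ ^ 2 / 2)) := by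
  have : Nontrivial (EuclideanSpace ℝ (Fin n)) :=
    Module.nontrivial_of_finrank_pos (R := ℝ) (by rw [finrank_euclideanSpace_fin]; omega)
  have hset : {γ : ℝ | 0 < γ ∧ ((n : ℝ) - 2) / d ^ 2 ≤ γ} =
      {γ : ℝ | 0 < γ ∧ (Module.finrank ℝ (EuclideanSpace ℝ (Fin n)) : ℝ) - 2 ≤ γ * d ^ 2} := by
    ext γ
    simp [div_le_iff₀ (by positivity : (0 : ℝ) < d ^ 2)]
  rw [hset]
  refine ((concaveOn_setIntegral_gaussian_of_starConvex volume hΩ hstar hd hball).smul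
    (by positivity : (0 : ℝ) ≤ ((2 * π) ^ ((n : ℝ) / 2))⁻¹)).congr fun γ hγ ↦ ?_
  simp only [smul_eq_mul, finrank_euclideanSpace_fin, ← integral_const_mul]
  refine setIntegral_congr_fun hΩ fun x _ ↦ ?_
  rw [div_rpow hγ.1.le (by positivity)]
  ring

theorem ser_convex_in_snr_awgn_general
    (n M : ℕ) (hn : 1 ≤ n)
    (q : Fin M → ℝ) (hq : ∀ i, 0 ≤ q i)
    (Ω : Fin M → Set (EuclideanSpace ℝ (Fin n)))
    (hΩmeas : ∀ i, MeasurableSet (Ω i))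
    (hΩstar : ∀ i, StarConvex ℝ (0 : EuclideanSpace ℝ (Fin n)) (Ω i))
    (dmin : ℝ) (hdmin : 0 < dmin)
    (hball : ∀ i, Metric.closedBall (0 : EuclideanSpace ℝ (Fin n)) dmin ⊆ Ω i)
    (Pe : ℝ → ℝ)
    (hPe : ∀ γ, Pe γ =
      1 - ∑ i, q i * ∫ x in Ω i,
        (γ / (2 * π)) ^ ((n : ℝ) / 2) * Real.exp (-γ * ‖x‖ ^ 2 / 2)) :
    ConvexOn ℝ {γ : ℝ | 0 < γ ∧ ((n : ℝ) - 2) / dmin ^ 2 ≤ γ} Pe ∧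
      (n ≤ 2 → ConvexOn ℝ (Ioi (0 : ℝ)) Pe) := by
  have hD : Convex ℝ {γ : ℝ | 0 < γ ∧ ((n : ℝ) - 2) / dmin ^ 2 ≤ γ} :=
    (convex_Ioi 0).inter (convex_Ici _)
  have hsum := concaveOn_sum (t := Finset.univ) hD fun i _ ↦
    (concaveOn_setIntegral_gaussianDensity_of_starConvex hn (hΩmeas i) (hΩstar i) hdmin
      (hball i)).smul (hq i)
  have hPe_convex := ((convexOn_const 1 hD).sub hsum).congr fun γ _ ↦ (hPe γ).symm
  refine ⟨hPe_convex, fun hn2 ↦ hPe_convex.subset (fun γ hγ ↦ ⟨hγ, ?_⟩) (convex_Ioi 0)⟩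
  have hn2' : (n : ℝ) - 2 ≤ 0 := by
    rw [sub_nonpos]
    exact_mod_cast hn2
  exact (div_nonpos_of_nonpos_of_nonneg hn2' (sq_nonneg _)).trans (le_of_lt hγ)

/-- In the AWGN channel, the SER of a decoder with center-convex
decision regions is convex in the SNR `γ` on `{γ | 0 < γ ∧ (n-2)/d_min² ≤ γ}`;
in particular, for `n ≤ 2` it is convex on all of `(0, ∞)`. -/
theorem ser_convex_in_snr_awgn
    (n M : ℕ) (hn : 1 ≤ n)
    (q : Fin M → ℝ) (hq : ∀ i, 0 ≤ q i) (hqsum : ∑ i, q i = 1)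
    (Ω : Fin M → Set (EuclideanSpace ℝ (Fin n)))
    (hΩmeas : ∀ i, MeasurableSet (Ω i))
    (hΩstar : ∀ i, StarConvex ℝ (0 : EuclideanSpace ℝ (Fin n)) (Ω i))
    (dmin : ℝ) (hdmin : 0 < dmin)
    (hball : ∀ i, Metric.closedBall (0 : EuclideanSpace ℝ (Fin n)) dmin ⊆ Ω i)
    (Pe : ℝ → ℝ)
    (hPe : ∀ γ, Pe γ =
      1 - ∑ i, q i * ∫ x in Ω i,
        (γ / (2 * π)) ^ ((n : ℝ) / 2) * Real.exp (-γ * ‖x‖ ^ 2 / 2)) :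
    ConvexOn ℝ {γ : ℝ | 0 < γ ∧ ((n : ℝ) - 2) / dmin ^ 2 ≤ γ} Pe ∧
      (n ≤ 2 → ConvexOn ℝ (Ioi (0 : ℝ)) Pe) :=
  ser_convex_in_snr_awgn_general n M hn q hq Ω hΩmeas hΩstar dmin hdmin hball Pe hPe
end

section
/- Let n ≥ 3 and let P_e be the symbol error rate of a decoder with center-convex decision regions in the AWGN channel, i.e. P_e(γ) = 1 − Σ_{i=1}^{M} q_i ∫_{Ω_i} (γ/(2π))^{n/2} exp(−γ‖x‖²/2) dx for SNR γ > 0. If Ω_i ⊆ Metric.closedBall 0 d_max for every i with d_max > 0, then P_e is concave on the interval (0, (n−2)/d_max²]. -/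
/-!
In polar coordinates `x = r • θ`, a region `Ω` star-shaped about the origin is, up to a null set,
`{r • θ | 0 < r ≤ ρ θ}` with `ρ` its radial function. Its Gaussian mass at SNR `γ` is therefore
the spherical integral of `(2π)^(-n/2) K(ρ θ √γ)`, where `K t = ∫₀ᵗ uⁿ⁻¹ e^(-u²/2) du`.
The derivative of `γ ↦ K(ρ √γ)` is `ρⁿ/2 · γ^((n-2)/2) e^(-ρ²γ/2)`, which increases as long as
`ρ² γ ≤ n - 2`. Since `ρ ≤ d_max`, every such mass is convex in `γ` on `(0, (n-2)/d_max²]`, and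
so `1 - ∑ qᵢ massᵢ` is concave there.
-/

open MeasureTheory Real Set Metric

theorem convexOn_finset_sum {𝕜 E β ι : Type*} [Semiring 𝕜] [PartialOrder 𝕜] [AddCommMonoid E]
    [AddCommMonoid β] [PartialOrder β] [IsOrderedAddMonoid β] [SMul 𝕜 E] [Module 𝕜 β]
    {s : Set E} (hs : Convex 𝕜 s) (t : Finset ι) {f : ι → E → β}
    (hf : ∀ i ∈ t, ConvexOn 𝕜 s (f i)) : ConvexOn 𝕜 s fun x => ∑ i ∈ t, f i x := by
  classical
  induction t using Finset.induction_on with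
  | empty => simpa using convexOn_const 0 hs
  | insert j t hj ih =>
    simp only [Finset.sum_insert hj]
    exact (hf j (t.mem_insert_self j)).add (ih fun i hi => hf i (Finset.mem_insert_of_mem hi))

theorem convexOn_integral {α E : Type*} [MeasurableSpace α] {μ : Measure α} [AddCommMonoid E]
    [Module ℝ E] {s : Set E} {F : α → E → ℝ} (hs : Convex ℝ s) (hF : ∀ a, ConvexOn ℝ s (F a))
    (hint : ∀ x ∈ s, Integrable (fun a => F a x) μ) :
    ConvexOn ℝ s fun x => ∫ a, F a x ∂μ := by
  refine ⟨hs, fun x hx y hy a b ha hb hab => ?_⟩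
  have hax := (hint x hx).const_mul a
  have hby := (hint y hy).const_mul b
  calc ∫ c, F c (a • x + b • y) ∂μ ≤ ∫ c, a * F c x + b * F c y ∂μ :=
        integral_mono (hint _ (hs hx hy ha hb hab)) (hax.add hby) fun c =>
          (hF c).2 hx hy ha hb hab
    _ = a * ∫ c, F c x ∂μ + b * ∫ c, F c y ∂μ := by
        rw [integral_add hax hby, integral_const_mul, integral_const_mul]

theorem monotoneOn_rpow_mul_exp_neg_mul {p a c : ℝ} (ha : 0 ≤ a) (hc : a * c ≤ p) :
    MonotoneOn (fun x => x ^ p * exp (-(a * x))) (Ioc 0 c) := by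
  have hderiv : ∀ x, 0 < x → HasDerivAt (fun x => x ^ p * exp (-(a * x)))
      (x ^ (p - 1) * exp (-(a * x)) * (p - a * x)) x := by
    intro x hx
    have hpow : HasDerivAt (fun x => x ^ p) (p * x ^ (p - 1)) x :=
      hasDerivAt_rpow_const (Or.inl hx.ne')
    have hexp : HasDerivAt (fun x => exp (-(a * x))) (exp (-(a * x)) * -a) x := by
      simpa using ((hasDerivAt_id x).const_mul a).neg.exp
    refine (hpow.mul hexp).congr_deriv ?_
    rw [show x ^ p = x ^ (p - 1) * x by rw [← rpow_add_one hx.ne', sub_add_cancel]]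
    ring
  refine monotoneOn_of_deriv_nonneg (convex_Ioc 0 c)
    (fun x hx => (hderiv x hx.1).continuousAt.continuousWithinAt)
    (fun x hx => (hderiv x (interior_subset hx).1).differentiableAt.differentiableWithinAt)
    fun x hx => ?_
  rw [interior_Ioc] at hx
  have hx0 : 0 < x := hx.1
  rw [(hderiv x hx0).deriv]
  have hax : a * x ≤ p := (mul_le_mul_of_nonneg_left hx.2.le ha).trans hc
  exact mul_nonneg (by positivity) (sub_nonneg.2 hax)

noncomputable def radialGaussianIntegral (n : ℕ) (t : ℝ) : ℝ :=
  ∫ u in (0 : ℝ)..t, u ^ (n - 1) * exp (-u ^ 2 / 2)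

theorem hasDerivAt_radialGaussianIntegral (n : ℕ) (t : ℝ) :
    HasDerivAt (radialGaussianIntegral n) (t ^ (n - 1) * exp (-t ^ 2 / 2)) t := by
  have hcont : Continuous fun u : ℝ => u ^ (n - 1) * exp (-u ^ 2 / 2) := by fun_prop
  exact intervalIntegral.integral_hasDerivAt_right (hcont.intervalIntegrable _ _)
    (hcont.stronglyMeasurableAtFilter _ _) hcont.continuousAt

theorem sqrt_pow_eq_rpow {x : ℝ} (hx : 0 ≤ x) (k : ℕ) : √x ^ k = x ^ ((k : ℝ) / 2) := by
  rw [← rpow_natCast, sqrt_eq_rpow, ← rpow_mul hx, one_div_mul_eq_div]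

theorem hasDerivAt_radialGaussianIntegral_mul_sqrt {n : ℕ} (hn : 1 ≤ n) (ρ : ℝ) {γ : ℝ}
    (hγ : 0 < γ) :
    HasDerivAt (fun γ => radialGaussianIntegral n (ρ * √γ))
      (ρ ^ n / 2 * (γ ^ (((n : ℝ) - 2) / 2) * exp (-(ρ ^ 2 / 2 * γ)))) γ := by
  refine ((hasDerivAt_radialGaussianIntegral n _).comp γ
    ((hasDerivAt_sqrt hγ.ne').const_mul ρ)).congr_deriv ?_
  have hs : 0 < √γ := sqrt_pos.2 hγ
  have hpow : γ ^ (((n : ℝ) - 2) / 2) = √γ ^ (n - 1) / √γ := by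
    rw [eq_div_iff hs.ne', sqrt_pow_eq_rpow hγ.le, sqrt_eq_rpow, ← rpow_add hγ,
      Nat.cast_sub hn]
    congr 1
    push_cast
    ring
  have hρn : ρ ^ n = ρ ^ (n - 1) * ρ := by rw [← pow_succ, Nat.sub_add_cancel hn]
  rw [hpow, hρn, mul_pow, mul_pow, sq_sqrt hγ.le]
  field_simp

theorem convexOn_radialGaussianIntegral_mul_sqrt {n : ℕ} (hn : 1 ≤ n) {ρ c : ℝ} (hρ : 0 ≤ ρ)
    (hc : ρ ^ 2 * c ≤ n - 2) :
    ConvexOn ℝ (Ioc 0 c) fun γ => radialGaussianIntegral n (ρ * √γ) := by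
  have hderiv := fun γ (hγ : 0 < γ) => hasDerivAt_radialGaussianIntegral_mul_sqrt hn ρ hγ
  have hmono :
      MonotoneOn (fun γ => γ ^ (((n : ℝ) - 2) / 2) * exp (-(ρ ^ 2 / 2 * γ))) (Ioc 0 c) :=
    monotoneOn_rpow_mul_exp_neg_mul (by positivity) (by linarith)
  refine MonotoneOn.convexOn_of_deriv (convex_Ioc 0 c)
    (fun γ hγ => (hderiv γ hγ.1).continuousAt.continuousWithinAt)
    (fun γ hγ => (hderiv γ (interior_subset hγ).1).differentiableAt.differentiableWithinAt) ?_
  rw [interior_Ioc]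
  intro x hx y hy hxy
  rw [(hderiv x hx.1).deriv, (hderiv y hy.1).deriv]
  exact mul_le_mul_of_nonneg_left (hmono (Ioo_subset_Ioc_self hx) (Ioo_subset_Ioc_self hy) hxy)
    (by positivity)

theorem integral_pow_mul_gaussian {n : ℕ} (hn : 1 ≤ n) (ρ : ℝ) {γ : ℝ} (hγ : 0 < γ) :
    ∫ r in (0 : ℝ)..ρ, r ^ (n - 1) * ((γ / (2 * π)) ^ ((n : ℝ) / 2) * exp (-γ * r ^ 2 / 2))
      = (2 * π) ^ (-(n : ℝ) / 2) * radialGaussianIntegral n (ρ * √γ) := by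
  have hs : 0 < √γ := sqrt_pos.2 hγ
  have hsubst : radialGaussianIntegral n (ρ * √γ)
      = √γ ^ n * ∫ r in (0 : ℝ)..ρ, r ^ (n - 1) * exp (-γ * r ^ 2 / 2) := by
    have h := intervalIntegral.integral_comp_mul_left
      (fun u => u ^ (n - 1) * exp (-u ^ 2 / 2)) hs.ne' (a := 0) (b := ρ)
    rw [mul_zero, mul_comm √γ ρ, ← radialGaussianIntegral, smul_eq_mul] at h
    simp_rw [mul_pow, sq_sqrt hγ.le, ← neg_mul, mul_assoc,
      intervalIntegral.integral_const_mul] at h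
    rw [← pow_mul_pow_sub _ hn, pow_one, mul_assoc, h, mul_inv_cancel_left₀ hs.ne']
  have hconst : (γ / (2 * π)) ^ ((n : ℝ) / 2) = (2 * π) ^ (-(n : ℝ) / 2) * √γ ^ n := by
    rw [div_rpow hγ.le (by positivity), sqrt_pow_eq_rpow hγ.le, neg_div,
      rpow_neg (by positivity)]
    ring
  simp_rw [mul_left_comm _ ((γ / (2 * π)) ^ ((n : ℝ) / 2))]
  rw [intervalIntegral.integral_const_mul, hsubst, hconst, mul_assoc]

/-- `0` when the ray `{r • θ | r > 0}` misses `Ω` or is unbounded in it (junk values of `sSup`). -/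
noncomputable def radialFunction {E : Type*} [AddCommGroup E] [Module ℝ E] (Ω : Set E) (θ : E) :
    ℝ :=
  sSup {r : ℝ | 0 < r ∧ r • θ ∈ Ω}

section RadialFunction

variable {E : Type*} [NormedAddCommGroup E] [NormedSpace ℝ E] {Ω : Set E} {θ : E} {d : ℝ}

theorem radialFunction_nonneg (Ω : Set E) (θ : E) : 0 ≤ radialFunction Ω θ :=
  sSup_nonneg fun _ hr => hr.1.le

theorem mem_upperBounds_radialFunction_set (hθ : ‖θ‖ = 1) (hball : Ω ⊆ closedBall 0 d) :
    d ∈ upperBounds {r : ℝ | 0 < r ∧ r • θ ∈ Ω} := fun r hr => by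
  simpa [norm_smul, hθ, abs_of_pos hr.1] using hball hr.2

theorem radialFunction_le (hθ : ‖θ‖ = 1) (hball : Ω ⊆ closedBall 0 d) (hd : 0 ≤ d) :
    radialFunction Ω θ ≤ d :=
  Real.sSup_le (mem_upperBounds_radialFunction_set hθ hball) hd

theorem le_radialFunction (hθ : ‖θ‖ = 1) (hball : Ω ⊆ closedBall 0 d) {r : ℝ} (hr : 0 < r)
    (hmem : r • θ ∈ Ω) : r ≤ radialFunction Ω θ :=
  le_csSup ⟨d, mem_upperBounds_radialFunction_set hθ hball⟩ ⟨hr, hmem⟩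

theorem smul_mem_of_lt_radialFunction (hstar : StarConvex ℝ 0 Ω) {r : ℝ} (hr : 0 < r)
    (hlt : r < radialFunction Ω θ) : r • θ ∈ Ω := by
  have hne : {s : ℝ | 0 < s ∧ s • θ ∈ Ω}.Nonempty := by
    by_contra h
    rw [not_nonempty_iff_eq_empty] at h
    rw [radialFunction, h, Real.sSup_empty] at hlt
    linarith
  obtain ⟨s, ⟨hs, hsθ⟩, hrs⟩ := exists_lt_of_lt_csSup hne hlt
  have h := hstar.smul_mem hsθ (div_nonneg hr.le hs.le) ((div_le_one hs).2 hrs.le)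
  rwa [smul_smul, div_mul_cancel₀ _ hs.ne'] at h

theorem integral_volumeIoiPow_indicator_smul (hstar : StarConvex ℝ 0 Ω)
    (hball : Ω ⊆ closedBall 0 d) (hθ : ‖θ‖ = 1) (k : ℕ) (f : E → ℝ) :
    ∫ r : Ioi (0 : ℝ), Ω.indicator f ((r : ℝ) • θ) ∂Measure.volumeIoiPow k
      = ∫ r in (0 : ℝ)..radialFunction Ω θ, r ^ k * f (r • θ) := by
  set ρ := radialFunction Ω θ
  have hae : ∀ᵐ r ∂volume.restrict (Ioi (0 : ℝ)),
      Real.toNNReal (r ^ k) • Ω.indicator f (r • θ)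
        = (Ioc 0 ρ).indicator (fun r => r ^ k * f (r • θ)) r := by
    -- `r • θ ∈ Ω ↔ r ≤ ρ` can only fail at `r = ρ`
    filter_upwards [ae_restrict_mem measurableSet_Ioi, Measure.ae_ne _ ρ] with r hr hne
    rw [NNReal.smul_def, Real.coe_toNNReal _ (pow_nonneg (le_of_lt hr) _)]
    by_cases hmem : r • θ ∈ Ω
    · have hρ : r ∈ Ioc 0 ρ := ⟨hr, le_radialFunction hθ hball hr hmem⟩
      rw [indicator_of_mem hmem, indicator_of_mem hρ, smul_eq_mul]
    · have hρ : r ∉ Ioc 0 ρ := fun h =>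
        hmem (smul_mem_of_lt_radialFunction hstar hr (lt_of_le_of_ne h.2 hne))
      rw [indicator_of_notMem hmem, indicator_of_notMem hρ, smul_zero]
  simp only [Measure.volumeIoiPow, ENNReal.ofReal]
  rw [integral_withDensity_eq_integral_smul (measurable_subtype_coe.pow_const _).real_toNNReal,
    integral_subtype_comap measurableSet_Ioi
      fun r : ℝ => Real.toNNReal (r ^ k) • Ω.indicator f (r • θ),
    integral_congr_ae hae, integral_indicator measurableSet_Ioc,
    Measure.restrict_restrict measurableSet_Ioc, inter_eq_self_of_subset_left Ioc_subset_Ioi_self,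
    intervalIntegral.integral_of_le (radialFunction_nonneg Ω θ)]

end RadialFunction

theorem comp_homeomorphUnitSphereProd_smul {E F : Type*} [NormedAddCommGroup E]
    [NormedSpace ℝ E] (g : E → F) (x : ({0}ᶜ : Set E)) :
    g (((homeomorphUnitSphereProd E x).2 : ℝ) • ((homeomorphUnitSphereProd E x).1 : E)) = g x := by
  have hx : (x : E) ≠ 0 := x.2
  simp only [homeomorphUnitSphereProd_apply_snd_coe, homeomorphUnitSphereProd_apply_fst_coe,
    smul_smul, mul_inv_cancel₀ (norm_ne_zero_iff.2 hx), one_smul]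

theorem integral_eq_integral_sphere_prod_Ioi {E F : Type*} [NormedAddCommGroup E]
    [NormedSpace ℝ E] [Nontrivial E] [FiniteDimensional ℝ E] [MeasurableSpace E] [BorelSpace E]
    [NormedAddCommGroup F] [NormedSpace ℝ F] (μ : Measure E) [μ.IsAddHaarMeasure] (g : E → F) :
    ∫ x, g x ∂μ = ∫ p : sphere (0 : E) 1 × Ioi (0 : ℝ), g ((p.2 : ℝ) • (p.1 : E))
      ∂μ.toSphere.prod (Measure.volumeIoiPow (Module.finrank ℝ E - 1)) := by
  calc ∫ x, g x ∂μ = ∫ x : ({0}ᶜ : Set E), g x ∂μ.comap Subtype.val := by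
        rw [integral_subtype_comap (measurableSet_singleton _).compl, restrict_compl_singleton]
    _ = ∫ x : ({0}ᶜ : Set E), g (((homeomorphUnitSphereProd E x).2 : ℝ) •
          ((homeomorphUnitSphereProd E x).1 : E)) ∂μ.comap Subtype.val := by
        simp only [comp_homeomorphUnitSphereProd_smul]
    _ = _ := μ.measurePreserving_homeomorphUnitSphereProd.integral_comp
        (Homeomorph.measurableEmbedding _) fun p => g ((p.2 : ℝ) • (p.1 : E))

theorem MeasureTheory.Integrable.comp_smul_sphere_prod_Ioi {E F : Type*} [NormedAddCommGroup E]
    [NormedSpace ℝ E] [FiniteDimensional ℝ E] [MeasurableSpace E] [BorelSpace E]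
    [NormedAddCommGroup F] {μ : Measure E} [μ.IsAddHaarMeasure] {g : E → F}
    (hg : Integrable g μ) :
    Integrable (fun p : sphere (0 : E) 1 × Ioi (0 : ℝ) => g ((p.2 : ℝ) • (p.1 : E)))
      (μ.toSphere.prod (Measure.volumeIoiPow (Module.finrank ℝ E - 1))) := by
  rw [← μ.measurePreserving_homeomorphUnitSphereProd.integrable_comp_emb
    (Homeomorph.measurableEmbedding _)]
  simp only [Function.comp_def, comp_homeomorphUnitSphereProd_smul]
  exact (integrableOn_iff_comap_subtypeVal (measurableSet_singleton _).compl).1 hg.integrableOn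

noncomputable def gaussianDensity (n : ℕ) (γ : ℝ) (x : EuclideanSpace ℝ (Fin n)) : ℝ :=
  (γ / (2 * π)) ^ ((n : ℝ) / 2) * exp (-γ * ‖x‖ ^ 2 / 2)

theorem integral_volumeIoiPow_indicator_gaussianDensity {n : ℕ} (hn : 1 ≤ n)
    {Ω : Set (EuclideanSpace ℝ (Fin n))} (hstar : StarConvex ℝ 0 Ω) {d : ℝ}
    (hball : Ω ⊆ closedBall 0 d) {θ : EuclideanSpace ℝ (Fin n)} (hθ : ‖θ‖ = 1) {γ : ℝ}
    (hγ : 0 < γ) :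
    ∫ r : Ioi (0 : ℝ), Ω.indicator (gaussianDensity n γ) ((r : ℝ) • θ)
        ∂Measure.volumeIoiPow (n - 1)
      = (2 * π) ^ (-(n : ℝ) / 2) * radialGaussianIntegral n (radialFunction Ω θ * √γ) := by
  rw [integral_volumeIoiPow_indicator_smul hstar hball hθ, ← integral_pow_mul_gaussian hn _ hγ]
  simp only [gaussianDensity, norm_smul, hθ, mul_one, norm_eq_abs, sq_abs]

theorem convexOn_setIntegral_gaussianDensity {n : ℕ} (hn : 2 ≤ n)
    {Ω : Set (EuclideanSpace ℝ (Fin n))} (hmeas : MeasurableSet Ω) (hstar : StarConvex ℝ 0 Ω)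
    {d : ℝ} (hd : 0 < d) (hball : Ω ⊆ closedBall 0 d) :
    ConvexOn ℝ (Ioc 0 ((n - 2) / d ^ 2)) fun γ => ∫ x in Ω, gaussianDensity n γ x := by
  have : Nontrivial (EuclideanSpace ℝ (Fin n)) :=
    Module.nontrivial_of_finrank_pos (R := ℝ) (by rw [finrank_euclideanSpace_fin]; omega)
  have hn2 : (2 : ℝ) ≤ n := by exact_mod_cast hn
  set c := ((n : ℝ) - 2) / d ^ 2
  let σ := (volume : Measure (EuclideanSpace ℝ (Fin n))).toSphere
  let G : ℝ → sphere (0 : EuclideanSpace ℝ (Fin n)) 1 → ℝ := fun γ θ =>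
    (2 * π) ^ (-(n : ℝ) / 2) * radialGaussianIntegral n (radialFunction Ω θ * √γ)
  have hray (γ : ℝ) (hγ : 0 < γ) (θ : sphere (0 : EuclideanSpace ℝ (Fin n)) 1) :
      ∫ r : Ioi (0 : ℝ), Ω.indicator (gaussianDensity n γ) ((r : ℝ) • (θ : _))
        ∂Measure.volumeIoiPow (n - 1) = G γ θ :=
    integral_volumeIoiPow_indicator_gaussianDensity (by omega) hstar hball
      (mem_sphere_zero_iff_norm.1 θ.2) hγ
  have hint (γ : ℝ) : Integrable (Ω.indicator (gaussianDensity n γ)) := by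
    refine (integrable_indicator_iff hmeas).2 (ContinuousOn.integrableOn_compact
      (isCompact_closedBall 0 d) ?_ |>.mono_set hball)
    unfold gaussianDensity
    fun_prop
  have hpolar (γ : ℝ) := (hint γ).comp_smul_sphere_prod_Ioi
  rw [finrank_euclideanSpace_fin] at hpolar
  have hG : EqOn (fun γ => ∫ θ, G γ θ ∂σ) (fun γ => ∫ x in Ω, gaussianDensity n γ x)
      (Ioc 0 c) := by
    intro γ hγ
    dsimp only
    rw [← integral_indicator hmeas, integral_eq_integral_sphere_prod_Ioi volume,
      finrank_euclideanSpace_fin, integral_prod _ (hpolar γ)]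
    exact integral_congr_ae (.of_forall fun θ => (hray γ hγ.1 θ).symm)
  refine (convexOn_integral (convex_Ioc 0 c) (fun θ => ?_) fun γ hγ => ?_).congr hG
  · have hρ0 := radialFunction_nonneg Ω θ
    have hρd := radialFunction_le (mem_sphere_zero_iff_norm.1 θ.2) hball hd.le
    have hc : 0 ≤ c := div_nonneg (by simp [sub_nonneg, hn2]) (by positivity)
    refine (convexOn_radialGaussianIntegral_mul_sqrt (by omega) hρ0 ?_).smul (by positivity)
    calc radialFunction Ω θ ^ 2 * c ≤ d ^ 2 * c := by gcongr
      _ = (n : ℝ) - 2 := mul_div_cancel₀ _ (by positivity)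
  · exact (hpolar γ).integral_prod_left.congr (.of_forall (hray γ hγ.1))

theorem ser_concave_low_snr_awgn_general
    (n M : ℕ) (hn : 3 ≤ n)
    (q : Fin M → ℝ) (hq : ∀ i, 0 ≤ q i)
    (Ω : Fin M → Set (EuclideanSpace ℝ (Fin n)))
    (hΩmeas : ∀ i, MeasurableSet (Ω i))
    (hΩstar : ∀ i, StarConvex ℝ (0 : EuclideanSpace ℝ (Fin n)) (Ω i))
    (dmax : ℝ) (hdmax : 0 < dmax)
    (hball : ∀ i, Ω i ⊆ Metric.closedBall (0 : EuclideanSpace ℝ (Fin n)) dmax)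
    (Pe : ℝ → ℝ)
    (hPe : ∀ γ, Pe γ =
      1 - ∑ i, q i * ∫ x in Ω i,
        (γ / (2 * π)) ^ ((n : ℝ) / 2) * Real.exp (-γ * ‖x‖ ^ 2 / 2)) :
    ConcaveOn ℝ (Ioc (0 : ℝ) (((n : ℝ) - 2) / dmax ^ 2)) Pe := by
  have hconvex : ConvexOn ℝ (Ioc 0 ((n - 2) / dmax ^ 2))
      fun γ => ∑ i, q i * ∫ x in Ω i, gaussianDensity n γ x :=
    convexOn_finset_sum (convex_Ioc _ _) _ fun i _ =>
      (convexOn_setIntegral_gaussianDensity (by omega) (hΩmeas i) (hΩstar i) hdmax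
        (hball i)).smul (hq i)
  refine (hconvex.neg.add_const 1).congr fun γ _ => ?_
  rw [hPe, Pi.add_apply, Pi.neg_apply, neg_add_eq_sub]
  rfl

/-- In the AWGN channel with `n ≥ 3`, the SER of a decoder with
center-convex decision regions contained in the ball of radius `d_max` is
concave in the SNR on the interval `(0, (n-2)/d_max²]`. -/
theorem ser_concave_low_snr_awgn
    (n M : ℕ) (hn : 3 ≤ n)
    (q : Fin M → ℝ) (hq : ∀ i, 0 ≤ q i) (hqsum : ∑ i, q i = 1)
    (Ω : Fin M → Set (EuclideanSpace ℝ (Fin n)))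
    (hΩmeas : ∀ i, MeasurableSet (Ω i))
    (hΩstar : ∀ i, StarConvex ℝ (0 : EuclideanSpace ℝ (Fin n)) (Ω i))
    (dmax : ℝ) (hdmax : 0 < dmax)
    (hball : ∀ i, Ω i ⊆ Metric.closedBall (0 : EuclideanSpace ℝ (Fin n)) dmax)
    (Pe : ℝ → ℝ)
    (hPe : ∀ γ, Pe γ =
      1 - ∑ i, q i * ∫ x in Ω i,
        (γ / (2 * π)) ^ ((n : ℝ) / 2) * Real.exp (-γ * ‖x‖ ^ 2 / 2)) :
    ConcaveOn ℝ (Ioc (0 : ℝ) (((n : ℝ) - 2) / dmax ^ 2)) Pe :=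
  ser_concave_low_snr_awgn_general n M hn q hq Ω hΩmeas hΩstar dmax hdmax hball Pe hPe
end

section
/- Let n ≥ 1 and let f : E → ℝ be a nonnegative, measurable, integrable function such that for every unit vector u ∈ E the function p ↦ p^{(n−2)/2} · f(√p • u) is antitone (non-increasing) on (0, ∞). Then for any decoder with center-convex decision regions (each Ω_i measurable and star-shaped about the origin), the symbol error rate P_e(γ) = 1 − Σ_{i=1}^{M} q_i ∫_{√γ • Ω_i} f(x) dx is convex on (0, ∞). -/
/-!
Write `Ω` in polar coordinates with the power variable `t = r²`. Along a unit direction `u` the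
weight is `g_u t = t ^ ((n - 2) / 2) f (√t • u) / 2`, non-increasing by hypothesis, and since `Ω`
is star-shaped the set `T_u = {t > 0 | √t • u ∈ Ω}` is `(0, s_u]` up to a null set. So the mass
of `f` in `√γ • Ω` is the spherical average of `∫₀^{γ s_u} g_u`, and an integral of a
non-increasing function up to a linear function of `γ` is concave in `γ`. Hence the probability
of correct decision is concave and the error rate convex.
-/

open MeasureTheory Real Set Pointwise
open scoped ENNReal

section DownClosed

variable {T : Set ℝ}

theorem ae_eq_Ioc_csSup (hT0 : T ⊆ Ioi 0) (hT : ∀ p ∈ T, Ioc 0 p ⊆ T) (hne : T.Nonempty)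
    (hbdd : BddAbove T) : T =ᵐ[volume] Ioc 0 (sSup T) := by
  have hIoo : Ioo 0 (sSup T) ⊆ T := fun t ht => by
    obtain ⟨p, hp, htp⟩ := exists_lt_of_lt_csSup hne ht.2
    exact hT p hp ⟨ht.1, htp.le⟩
  have hIoc : T ⊆ Ioc 0 (sSup T) := fun t ht => ⟨hT0 ht, le_csSup hbdd ht⟩
  exact hIoc.eventuallyLE.antisymm (Ioo_ae_eq_Ioc.symm.le.trans hIoo.eventuallyLE)

theorem eq_Ioi_of_not_bddAbove (hT0 : T ⊆ Ioi 0) (hT : ∀ p ∈ T, Ioc 0 p ⊆ T)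
    (hbdd : ¬BddAbove T) : T = Ioi 0 := by
  refine hT0.antisymm fun t ht => ?_
  obtain ⟨p, hp, htp⟩ := not_bddAbove_iff.1 hbdd t
  exact hT p hp ⟨ht, htp.le⟩

theorem smul_set_subset_Ioi (hT0 : T ⊆ Ioi 0) {γ : ℝ} (hγ : 0 < γ) : γ • T ⊆ Ioi 0 := by
  rintro _ ⟨p, hp, rfl⟩
  exact mul_pos hγ (hT0 hp)

theorem Ioc_subset_smul_set (hT : ∀ p ∈ T, Ioc 0 p ⊆ T) {γ : ℝ} (hγ : 0 < γ) :
    ∀ p ∈ γ • T, Ioc 0 p ⊆ γ • T := by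
  rintro _ ⟨p, hp, rfl⟩ t ⟨ht0, htp⟩
  rw [mem_smul_set_iff_inv_smul_mem₀ hγ.ne', smul_eq_mul]
  refine hT p hp ⟨by positivity, ?_⟩
  rw [inv_mul_le_iff₀ hγ]
  exact htp

end DownClosed

section Antitone

variable {g : ℝ → ℝ≥0∞}

theorem setLIntegral_Ioc_zero_concave_of_le (hg : AntitoneOn g (Ioi 0)) {a b c₁ c₂ : ℝ}
    (ha : 0 < a) (hab : a ≤ b) (h₁ : 0 ≤ c₁) (h₂ : 0 ≤ c₂) (h₁₂ : c₁ + c₂ = 1) :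
    ENNReal.ofReal c₁ * (∫⁻ t in Ioc 0 a, g t) + ENNReal.ofReal c₂ * (∫⁻ t in Ioc 0 b, g t)
      ≤ ∫⁻ t in Ioc 0 (c₁ * a + c₂ * b), g t := by
  set c := c₁ * a + c₂ * b
  have hac : a ≤ c := by nlinarith
  have hcb : c ≤ b := by nlinarith
  have hc : 0 < c := ha.trans_le hac
  have split_c : ∫⁻ t in Ioc 0 c, g t = (∫⁻ t in Ioc 0 a, g t) + ∫⁻ t in Ioc a c, g t := by
    rw [← Ioc_union_Ioc_eq_Ioc ha.le hac,
      lintegral_union measurableSet_Ioc (Ioc_disjoint_Ioc_of_le le_rfl)]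
  have split_b : ∫⁻ t in Ioc 0 b, g t = (∫⁻ t in Ioc 0 c, g t) + ∫⁻ t in Ioc c b, g t := by
    rw [← Ioc_union_Ioc_eq_Ioc hc.le hcb,
      lintegral_union measurableSet_Ioc (Ioc_disjoint_Ioc_of_le le_rfl)]
  have upper : ∫⁻ t in Ioc c b, g t ≤ g c * ENNReal.ofReal (b - c) := by
    rw [← Real.volume_Ioc, ← setLIntegral_const]
    exact setLIntegral_mono measurable_const fun t ht => hg hc (hc.trans ht.1) ht.1.le
  have lower : g c * ENNReal.ofReal (c - a) ≤ ∫⁻ t in Ioc a c, g t := by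
    rw [← Real.volume_Ioc, ← setLIntegral_const]
    exact setLIntegral_mono' measurableSet_Ioc fun t ht => hg (ha.trans ht.1) hc ht.2
  -- the excess of `b` over `c` and the excess of `c` over `a` carry the same weight
  have hweights : c₂ * (b - c) = c₁ * (c - a) := by
    simp only [c]; linear_combination (-(b * c₂ + a * c₁)) * h₁₂
  have tail : ENNReal.ofReal c₂ * (∫⁻ t in Ioc c b, g t)
      ≤ ENNReal.ofReal c₁ * ∫⁻ t in Ioc a c, g t :=
    calc ENNReal.ofReal c₂ * (∫⁻ t in Ioc c b, g t)
        ≤ ENNReal.ofReal c₂ * (g c * ENNReal.ofReal (b - c)) := by gcongr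
      _ = ENNReal.ofReal c₁ * (g c * ENNReal.ofReal (c - a)) := by
        rw [mul_left_comm, ← ENNReal.ofReal_mul h₂, hweights, ENNReal.ofReal_mul h₁,
          mul_left_comm]
      _ ≤ ENNReal.ofReal c₁ * ∫⁻ t in Ioc a c, g t := by gcongr
  calc ENNReal.ofReal c₁ * (∫⁻ t in Ioc 0 a, g t) + ENNReal.ofReal c₂ * (∫⁻ t in Ioc 0 b, g t)
      ≤ ENNReal.ofReal c₁ * (∫⁻ t in Ioc 0 a, g t) + ENNReal.ofReal c₂ * (∫⁻ t in Ioc 0 c, g t)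
          + ENNReal.ofReal c₁ * ∫⁻ t in Ioc a c, g t := by
        rw [split_b, mul_add, ← add_assoc]; gcongr
    _ = (ENNReal.ofReal c₁ + ENNReal.ofReal c₂) * ∫⁻ t in Ioc 0 c, g t := by
        rw [split_c]; ring
    _ = ∫⁻ t in Ioc 0 c, g t := by
        rw [← ENNReal.ofReal_add h₁ h₂, h₁₂, ENNReal.ofReal_one, one_mul]

theorem setLIntegral_Ioc_zero_concave (hg : AntitoneOn g (Ioi 0)) {a b c₁ c₂ : ℝ}
    (ha : 0 < a) (hb : 0 < b) (h₁ : 0 ≤ c₁) (h₂ : 0 ≤ c₂) (h₁₂ : c₁ + c₂ = 1) :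
    ENNReal.ofReal c₁ * (∫⁻ t in Ioc 0 a, g t) + ENNReal.ofReal c₂ * (∫⁻ t in Ioc 0 b, g t)
      ≤ ∫⁻ t in Ioc 0 (c₁ * a + c₂ * b), g t := by
  rcases le_total a b with hab | hba
  · exact setLIntegral_Ioc_zero_concave_of_le hg ha hab h₁ h₂ h₁₂
  · rw [add_comm, add_comm (c₁ * a)]
    exact setLIntegral_Ioc_zero_concave_of_le hg hb hba h₂ h₁ (by linarith)

theorem setLIntegral_smul_concave (hg : AntitoneOn g (Ioi 0)) {T : Set ℝ}
    (hT0 : T ⊆ Ioi 0) (hT : ∀ p ∈ T, Ioc 0 p ⊆ T) {a b c₁ c₂ : ℝ} (ha : 0 < a) (hb : 0 < b)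
    (h₁ : 0 ≤ c₁) (h₂ : 0 ≤ c₂) (h₁₂ : c₁ + c₂ = 1) :
    ENNReal.ofReal c₁ * (∫⁻ t in a • T, g t) + ENNReal.ofReal c₂ * (∫⁻ t in b • T, g t)
      ≤ ∫⁻ t in (c₁ * a + c₂ * b) • T, g t := by
  have hc : 0 < c₁ * a + c₂ * b := convex_Ioi (0 : ℝ) ha hb h₁ h₂ h₁₂
  rcases T.eq_empty_or_nonempty with rfl | hne
  · simp
  by_cases hbdd : BddAbove T
  · have hs : 0 < sSup T := (hT0 hne.some_mem).trans_le (le_csSup hbdd hne.some_mem)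
    have hscale : ∀ γ : ℝ, 0 < γ → ∫⁻ t in γ • T, g t = ∫⁻ t in Ioc 0 (γ * sSup T), g t := by
      intro γ hγ
      rw [← smul_eq_mul, ← Real.sSup_smul_of_nonneg hγ.le]
      exact setLIntegral_congr (ae_eq_Ioc_csSup (smul_set_subset_Ioi hT0 hγ)
        (Ioc_subset_smul_set hT hγ) (hne.smul_set) (hbdd.smul_of_nonneg hγ.le))
    rw [hscale a ha, hscale b hb, hscale _ hc, add_mul, mul_assoc, mul_assoc]
    exact setLIntegral_Ioc_zero_concave hg (mul_pos ha hs) (mul_pos hb hs) h₁ h₂ h₁₂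
  · have hIoi : ∀ γ : ℝ, 0 < γ → γ • T = Ioi 0 := fun γ hγ => by
      rw [eq_Ioi_of_not_bddAbove hT0 hT hbdd, LinearOrderedField.smul_Ioi hγ, mul_zero]
    rw [hIoi a ha, hIoi b hb, hIoi _ hc, ← add_mul, ← ENNReal.ofReal_add h₁ h₂, h₁₂,
      ENNReal.ofReal_one, one_mul]

end Antitone

theorem lintegral_Ioi_pow_mul_eq_sqrt (m : ℕ) (G : ℝ → ℝ≥0∞) :
    ∫⁻ r in Ioi 0, ENNReal.ofReal (r ^ m) * G r
      = ∫⁻ t in Ioi 0, ENNReal.ofReal (t ^ (((m : ℝ) - 1) / 2) / 2) * G (√t) := by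
  have himage : Real.sqrt '' Ioi (0 : ℝ) = Ioi 0 := by
    refine (image_subset_iff.2 fun t ht => sqrt_pos.2 ht).antisymm fun r (hr : 0 < r) => ?_
    exact ⟨r ^ 2, pow_pos hr 2, sqrt_sq hr.le⟩
  have hinj : InjOn Real.sqrt (Ioi (0 : ℝ)) := fun s hs t ht hst => by
    rw [← sq_sqrt (le_of_lt hs), ← sq_sqrt (le_of_lt ht)]
    exact congrArg (· ^ 2) hst
  conv_lhs => rw [← himage]
  rw [lintegral_image_eq_lintegral_abs_deriv_mul measurableSet_Ioi
    (fun t ht => (hasDerivAt_sqrt (ne_of_gt ht)).hasDerivWithinAt) hinj]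
  refine setLIntegral_congr_fun measurableSet_Ioi fun t (ht : 0 < t) => ?_
  have hjac : |1 / (2 * √t)| * √t ^ m = t ^ (((m : ℝ) - 1) / 2) / 2 := by
    rw [abs_of_pos (by positivity), sqrt_eq_rpow, ← rpow_natCast, ← rpow_mul ht.le,
      show ((m : ℝ) - 1) / 2 = 1 / 2 * m - 1 / 2 by ring, rpow_sub ht]
    ring
  rw [← mul_assoc, ← ENNReal.ofReal_mul (abs_nonneg _), hjac]

section SqRadii

variable {E : Type*} [NormedAddCommGroup E] [NormedSpace ℝ E]

def sqRadii (Ω : Set E) (u : E) : Set ℝ := {t | 0 < t ∧ √t • u ∈ Ω}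

theorem measurableSet_sqRadii [MeasurableSpace E] [BorelSpace E] {Ω : Set E}
    (hΩ : MeasurableSet Ω) (u : E) : MeasurableSet (sqRadii Ω u) :=
  measurableSet_Ioi.inter (hΩ.preimage (by fun_prop))

theorem sqRadii_sqrt_smul (Ω : Set E) (u : E) {γ : ℝ} (hγ : 0 < γ) :
    sqRadii (√γ • Ω) u = γ • sqRadii Ω u := by
  ext t
  have hsqrt : √(γ⁻¹ * t) • u = (√γ)⁻¹ • √t • u := by
    rw [sqrt_mul (inv_nonneg.2 hγ.le), sqrt_inv, smul_smul]
  rw [mem_smul_set_iff_inv_smul_mem₀ hγ.ne', smul_eq_mul]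
  refine (mul_pos_iff_of_pos_left (inv_pos.2 hγ)).symm.and ?_
  rw [hsqrt, ← mem_smul_set_iff_inv_smul_mem₀ (sqrt_pos.2 hγ).ne']

theorem StarConvex.Ioc_subset_sqRadii {Ω : Set E} (hΩ : StarConvex ℝ 0 Ω) (u : E) :
    ∀ p ∈ sqRadii Ω u, Ioc 0 p ⊆ sqRadii Ω u := by
  rintro p ⟨hp, hpΩ⟩ t ⟨ht, htp⟩
  refine ⟨ht, ?_⟩
  have hsp : 0 < √p := sqrt_pos.2 hp
  have := hΩ.smul_mem hpΩ (div_nonneg (sqrt_nonneg t) hsp.le)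
    ((div_le_one hsp).2 (sqrt_le_sqrt htp))
  rwa [smul_smul, div_mul_cancel₀ _ hsp.ne'] at this

end SqRadii

section Polar

variable {E : Type*} [NormedAddCommGroup E] [NormedSpace ℝ E] [FiniteDimensional ℝ E]
  [MeasurableSpace E] [BorelSpace E] [Nontrivial E] (μ : Measure E) [μ.IsAddHaarMeasure]

theorem lintegral_eq_lintegral_toSphere_Ioi {F : E → ℝ≥0∞} (hF : Measurable F) :
    ∫⁻ x, F x ∂μ = ∫⁻ u, (∫⁻ r in Ioi (0 : ℝ),
      ENNReal.ofReal (r ^ (Module.finrank ℝ E - 1)) * F (r • (u : E))) ∂μ.toSphere := by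
  have hmp := μ.measurePreserving_homeomorphUnitSphereProd
  calc ∫⁻ x, F x ∂μ = ∫⁻ x : ({0}ᶜ : Set E), F x ∂μ.comap (↑) := by
        rw [lintegral_subtype_comap (measurableSet_singleton _).compl, restrict_compl_singleton]
    _ = ∫⁻ p, F ((p.2 : ℝ) • (p.1 : E))
          ∂μ.toSphere.prod (.volumeIoiPow (Module.finrank ℝ E - 1)) := by
        rw [← hmp.lintegral_comp_emb (Homeomorph.measurableEmbedding _)]
        refine lintegral_congr fun x => ?_
        simp [homeomorphUnitSphereProd, smul_inv_smul₀ (norm_ne_zero_iff.2 x.2)]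
    _ = _ := by
        rw [lintegral_prod _ (by fun_prop)]
        refine lintegral_congr fun u => ?_
        rw [Measure.volumeIoiPow, lintegral_withDensity_eq_lintegral_mul _ (by fun_prop)
          (by fun_prop), ← lintegral_subtype_comap measurableSet_Ioi]
        rfl

theorem setLIntegral_eq_lintegral_toSphere_sqRadii {F : E → ℝ≥0∞} (hF : Measurable F)
    {Ω : Set E} (hΩ : MeasurableSet Ω) :
    ∫⁻ x in Ω, F x ∂μ = ∫⁻ u, (∫⁻ t in sqRadii Ω u,
      ENNReal.ofReal (t ^ (((Module.finrank ℝ E : ℝ) - 2) / 2) / 2) * F (√t • (u : E)))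
        ∂μ.toSphere := by
  have hdim :
      (((Module.finrank ℝ E - 1 : ℕ) : ℝ) - 1) / 2 = ((Module.finrank ℝ E : ℝ) - 2) / 2 := by
    rw [Nat.cast_sub Module.finrank_pos]; ring
  rw [← lintegral_indicator hΩ, lintegral_eq_lintegral_toSphere_Ioi μ (hF.indicator hΩ)]
  refine lintegral_congr fun u => ?_
  rw [lintegral_Ioi_pow_mul_eq_sqrt, hdim, ← lintegral_indicator measurableSet_Ioi,
    ← lintegral_indicator (measurableSet_sqRadii hΩ _)]
  refine lintegral_congr fun t => ?_
  by_cases ht : 0 < t <;> by_cases h : √t • (u : E) ∈ Ω <;> simp [indicator, sqRadii, ht, h]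

theorem setLIntegral_sqrt_smul_concave {F : E → ℝ≥0∞} (hF : Measurable F) {Ω : Set E}
    (hΩ : MeasurableSet Ω) (hΩ0 : StarConvex ℝ 0 Ω)
    (hF_anti : ∀ u : Metric.sphere (0 : E) 1, AntitoneOn
      (fun t => ENNReal.ofReal (t ^ (((Module.finrank ℝ E : ℝ) - 2) / 2) / 2) * F (√t • (u : E)))
      (Ioi 0))
    {a b c₁ c₂ : ℝ} (ha : 0 < a) (hb : 0 < b) (h₁ : 0 ≤ c₁) (h₂ : 0 ≤ c₂) (h₁₂ : c₁ + c₂ = 1) :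
    ENNReal.ofReal c₁ * (∫⁻ x in √a • Ω, F x ∂μ) + ENNReal.ofReal c₂ * (∫⁻ x in √b • Ω, F x ∂μ)
      ≤ ∫⁻ x in √(c₁ * a + c₂ * b) • Ω, F x ∂μ := by
  have hc : 0 < c₁ * a + c₂ * b := convex_Ioi (0 : ℝ) ha hb h₁ h₂ h₁₂
  simp only [setLIntegral_eq_lintegral_toSphere_sqRadii μ hF (hΩ.const_smul₀ _),
    sqRadii_sqrt_smul _ _ ha, sqRadii_sqrt_smul _ _ hb, sqRadii_sqrt_smul _ _ hc]
  refine (add_le_add (lintegral_const_mul_le _ _) (lintegral_const_mul_le _ _)).trans <|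
    (le_lintegral_add _ _).trans <| lintegral_mono fun u => ?_
  exact setLIntegral_smul_concave (hF_anti u) (fun t ht => ht.1) (hΩ0.Ioc_subset_sqRadii u)
    ha hb h₁ h₂ h₁₂

end Polar

theorem concaveOn_finset_sum {𝕜 E β ι : Type*} [Semiring 𝕜] [PartialOrder 𝕜] [AddCommMonoid E]
    [SMul 𝕜 E] [AddCommMonoid β] [PartialOrder β] [IsOrderedAddMonoid β] [Module 𝕜 β]
    {s : Set E} (hs : Convex 𝕜 s) (t : Finset ι) {f : ι → E → β}
    (hf : ∀ i ∈ t, ConcaveOn 𝕜 s (f i)) : ConcaveOn 𝕜 s fun x => ∑ i ∈ t, f i x := by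
  classical
  induction t using Finset.induction_on with
  | empty => simpa using concaveOn_const 0 hs
  | insert i t hi ih =>
    simp only [Finset.sum_insert hi]
    exact (hf i (Finset.mem_insert_self i t)).add
      (ih fun j hj => hf j (Finset.mem_insert_of_mem hj))

theorem concaveOn_toReal_of_le {E : Type*} [AddCommMonoid E] [Module ℝ E] {s : Set E}
    (hs : Convex ℝ s) {φ : E → ℝ≥0∞} (hφ : ∀ x ∈ s, φ x ≠ ∞)
    (h : ∀ x ∈ s, ∀ y ∈ s, ∀ a b : ℝ, 0 ≤ a → 0 ≤ b → a + b = 1 →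
      ENNReal.ofReal a * φ x + ENNReal.ofReal b * φ y ≤ φ (a • x + b • y)) :
    ConcaveOn ℝ s fun x => (φ x).toReal := by
  refine ⟨hs, fun x hx y hy a b ha hb hab => ?_⟩
  have := ENNReal.toReal_mono (hφ _ (hs hx hy ha hb hab)) (h x hx y hy a b ha hb hab)
  rwa [ENNReal.toReal_add (ENNReal.mul_ne_top ENNReal.ofReal_ne_top (hφ x hx))
    (ENNReal.mul_ne_top ENNReal.ofReal_ne_top (hφ y hy)), ENNReal.toReal_mul, ENNReal.toReal_mul,
    ENNReal.toReal_ofReal ha, ENNReal.toReal_ofReal hb] at this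

theorem ser_always_convex_decreasing_power_density_general
    (n M : ℕ) (hn : 1 ≤ n)
    (f : EuclideanSpace ℝ (Fin n) → ℝ)
    (hf_nonneg : ∀ x, 0 ≤ f x) (hf_meas : Measurable f)
    (hf_int : Integrable f)
    (hanti : ∀ u : EuclideanSpace ℝ (Fin n), ‖u‖ = 1 →
      AntitoneOn (fun p : ℝ => p ^ (((n : ℝ) - 2) / 2) * f (Real.sqrt p • u))
        (Ioi (0 : ℝ)))
    (q : Fin M → ℝ) (hq : ∀ i, 0 ≤ q i)
    (Ω : Fin M → Set (EuclideanSpace ℝ (Fin n)))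
    (hΩmeas : ∀ i, MeasurableSet (Ω i))
    (hΩstar : ∀ i, StarConvex ℝ (0 : EuclideanSpace ℝ (Fin n)) (Ω i))
    (Pe : ℝ → ℝ)
    (hPe : ∀ γ, Pe γ = 1 - ∑ i, q i * ∫ x in Real.sqrt γ • Ω i, f x) :
    ConvexOn ℝ (Ioi (0 : ℝ)) Pe := by
  have : Nonempty (Fin n) := ⟨⟨0, hn⟩⟩
  have hF_anti : ∀ u : Metric.sphere (0 : EuclideanSpace ℝ (Fin n)) 1, AntitoneOn
      (fun t => ENNReal.ofReal (t ^ (((Module.finrank ℝ (EuclideanSpace ℝ (Fin n)) : ℝ) - 2) / 2)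
        / 2) * ENNReal.ofReal (f (√t • (u : EuclideanSpace ℝ (Fin n))))) (Ioi 0) := by
    intro u s (hs : 0 < s) t (ht : 0 < t) hst
    have hu : ‖(u : EuclideanSpace ℝ (Fin n))‖ = 1 := mem_sphere_zero_iff_norm.1 u.2
    simp only [finrank_euclideanSpace_fin]
    rw [← ENNReal.ofReal_mul (by positivity), ← ENNReal.ofReal_mul (by positivity),
      div_mul_eq_mul_div, div_mul_eq_mul_div]
    exact ENNReal.ofReal_le_ofReal (div_le_div_of_nonneg_right (hanti _ hu hs ht hst) two_pos.le)
  have hregion : ∀ i, ConcaveOn ℝ (Ioi 0) fun γ => ∫ x in √γ • Ω i, f x := fun i => by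
    simp only [integral_eq_lintegral_of_nonneg_ae (ae_of_all _ hf_nonneg)
      hf_meas.aestronglyMeasurable]
    refine concaveOn_toReal_of_le (convex_Ioi 0)
      (fun γ _ => hf_int.integrableOn.lintegral_lt_top.ne) fun a ha b hb c₁ c₂ h₁ h₂ h₁₂ => ?_
    exact setLIntegral_sqrt_smul_concave volume hf_meas.ennreal_ofReal (hΩmeas i) (hΩstar i)
      hF_anti ha hb h₁ h₂ h₁₂
  have hsum := concaveOn_finset_sum (convex_Ioi 0) Finset.univ fun i _ => (hregion i).smul (hq i)
  have hPe' : Pe = (fun _ => 1) - fun γ => ∑ i, q i • ∫ x in √γ • Ω i, f x := funext hPe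
  rw [hPe']
  exact (convexOn_const 1 (convex_Ioi 0)).sub hsum

/-- If the radial noise power density `p ↦ p^((n-2)/2) f(√p • u)`
is non-increasing on `(0, ∞)` along every direction, then the SER of any decoder
with center-convex decision regions is convex in the SNR on `(0, ∞)`. -/
theorem ser_always_convex_decreasing_power_density
    (n M : ℕ) (hn : 1 ≤ n)
    (f : EuclideanSpace ℝ (Fin n) → ℝ)
    (hf_nonneg : ∀ x, 0 ≤ f x) (hf_meas : Measurable f)
    (hf_int : Integrable f)
    (hanti : ∀ u : EuclideanSpace ℝ (Fin n), ‖u‖ = 1 →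
      AntitoneOn (fun p : ℝ => p ^ (((n : ℝ) - 2) / 2) * f (Real.sqrt p • u))
        (Ioi (0 : ℝ)))
    (q : Fin M → ℝ) (hq : ∀ i, 0 ≤ q i) (hqsum : ∑ i, q i = 1)
    (Ω : Fin M → Set (EuclideanSpace ℝ (Fin n)))
    (hΩmeas : ∀ i, MeasurableSet (Ω i))
    (hΩstar : ∀ i, StarConvex ℝ (0 : EuclideanSpace ℝ (Fin n)) (Ω i))
    (Pe : ℝ → ℝ)
    (hPe : ∀ γ, Pe γ = 1 - ∑ i, q i * ∫ x in Real.sqrt γ • Ω i, f x) :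
    ConvexOn ℝ (Ioi (0 : ℝ)) Pe :=
  ser_always_convex_decreasing_power_density_general n M hn f hf_nonneg hf_meas hf_int hanti q hq Ω
    hΩmeas hΩstar Pe hPe
end
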